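/- For every k-history s, S_n(s) is a structured n,k-history. -/

import Mathlib

/-- A list over `A × Fin k` is *basic* (for parameter `n`) if it has length at most `n`
and all its pebble indices (second components) are distinct. -/
def basic {A : Type} {k : ℕ} (n : ℕ) (l : List (A × Fin k)) : Prop :=
  l.length ≤ n ∧ (l.map Prod.snd).Nodup

instance {A : Type} {k : ℕ} (n : ℕ) (l : List (A × Fin k)) : Decidable (basic n l) := by
  unfold basic; infer_instance

/-- The length of the largest basic prefix of `s`. -/
def lbp {A : Type} {k : ℕ} (n : ℕ) (s : List (A × Fin k)) : ℕ :=
  ((List.range (s.length + 1)).filter (fun m => decide (basic n (s.take m)))).foldr max 0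

/-- The `n`-structure function `S_n`: decompose a `k`-history into its largest basic
prefix followed by the structuring of the rest. -/
def Sn {A : Type} {k : ℕ} (n : ℕ) (s : List (A × Fin k)) : List (List (A × Fin k)) :=
  if h : s.length = 0 then []
  else if basic n s then [s]
  else s.take (max 1 (lbp n s)) :: Sn n (s.drop (max 1 (lbp n s)))
termination_by s.length
decreasing_by
  have h1 : 0 < s.length := Nat.pos_of_ne_zero h
  have h2 : 0 < max 1 (lbp n s) := lt_of_lt_of_le one_pos (le_max_left _ _)
  simp only [List.length_drop]
  omega

/-- An `n,k`-history (a list of blocks) is *structured* if for each pair of successive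
blocks `s, s'`, either `s` has length exactly `n` or `s'` begins with a pair whose
pebble index occurs in `s`. -/
def structured {A : Type} {k : ℕ} (n : ℕ) (t : List (List (A × Fin k))) : Prop :=
  t.Chain' (fun s s' => s.length = n ∨ ∃ a p, s'.head? = some (a, p) ∧ p ∈ s.map Prod.snd)

/-! Each block of `S_n s` is a largest basic prefix of what remains. If such a block is shorter
than `n`, then appending the next pair destroys basicness only through a repeated pebble index,
and that next pair is the first pair of the following block: this is the structuredness
condition. -/

section Structuring

variable {A : Type} {k n : ℕ} {s : List (A × Fin k)}

theorem basic_nil : basic n ([] : List (A × Fin k)) := by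
  simp [basic]

theorem lbp_le_length_and_basic_take (n : ℕ) (s : List (A × Fin k)) :
    lbp n s ≤ s.length ∧ basic n (s.take (lbp n s)) := by
  have hne : (List.range (s.length + 1)).filter (fun m => decide (basic n (s.take m))) ≠ [] :=
    List.ne_nil_of_mem (a := 0) (by simp [basic])
  simpa [lbp, Nat.lt_succ_iff] using List.maximum_mem (List.foldr_max_of_ne_nil hne).symm

theorem basic_take_lbp (n : ℕ) (s : List (A × Fin k)) : basic n (s.take (lbp n s)) :=
  (lbp_le_length_and_basic_take n s).2

theorem le_lbp {m : ℕ} (hm : m ≤ s.length) (hb : basic n (s.take m)) : m ≤ lbp n s :=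
  List.le_max_of_le' 0 (by simpa [Nat.lt_succ_iff] using ⟨hm, hb⟩) le_rfl

theorem one_le_lbp (hn : 1 ≤ n) (hs : s ≠ []) : 1 ≤ lbp n s := by
  obtain ⟨x, t, rfl⟩ := List.exists_cons_of_ne_nil hs
  exact le_lbp (by simp) (by simpa [basic] using hn)

theorem lbp_lt_length (hb : ¬ basic n s) : lbp n s < s.length := by
  obtain ⟨hle, hbasic⟩ := lbp_le_length_and_basic_take n s
  refine hle.lt_of_ne fun heq => hb ?_
  rwa [heq, List.take_length] at hbasic

theorem length_eq_or_snd_mem_of_not_basic_append {l : List (A × Fin k)} {x : A × Fin k}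
    (hl : basic n l) (hx : ¬ basic n (l ++ [x])) : l.length = n ∨ x.2 ∈ l.map Prod.snd := by
  by_contra! h
  refine hx ⟨?_, ?_⟩
  · simpa using lt_of_le_of_ne hl.1 h.1
  · rw [List.map_append, List.nodup_append]
    refine ⟨hl.2, List.nodup_singleton _, ?_⟩
    rintro p hp q hq rfl
    rw [List.map_singleton, List.mem_singleton] at hq
    exact h.2 (hq ▸ hp)

theorem length_take_lbp_eq_or_head_drop_lbp_mem (hb : ¬ basic n s) :
    (s.take (lbp n s)).length = n ∨ ∃ a p, (s.drop (lbp n s)).head? = some (a, p) ∧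
      p ∈ (s.take (lbp n s)).map Prod.snd := by
  have hlt := lbp_lt_length hb
  have htake : s.take (lbp n s + 1) = s.take (lbp n s) ++ [s[lbp n s]] := by
    rw [List.take_add_one, List.getElem?_eq_getElem hlt, Option.toList_some]
  have hnext : ¬ basic n (s.take (lbp n s) ++ [s[lbp n s]]) := fun h =>
    (lbp n s).lt_irrefl (le_lbp hlt (htake ▸ h))
  refine (length_eq_or_snd_mem_of_not_basic_append (basic_take_lbp n s) hnext).imp_right
    fun hmem => ⟨s[lbp n s].1, s[lbp n s].2, ?_, hmem⟩
  rw [List.head?_drop, List.getElem?_eq_getElem hlt]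

theorem Sn_nil : Sn n ([] : List (A × Fin k)) = [] := by
  rw [Sn, dif_pos List.length_nil]

theorem Sn_of_basic (hs : s ≠ []) (hb : basic n s) : Sn n s = [s] := by
  rw [Sn, dif_neg (by simpa using hs), if_pos hb]

theorem Sn_of_not_basic (hn : 1 ≤ n) (hb : ¬ basic n s) :
    Sn n s = s.take (lbp n s) :: Sn n (s.drop (lbp n s)) := by
  have hs : s ≠ [] := fun h => hb (h ▸ basic_nil)
  rw [Sn, dif_neg (by simpa using hs), if_neg hb, max_eq_right (one_le_lbp hn hs)]

theorem head?_eq_of_mem_head?_Sn {b : List (A × Fin k)} (hb : b ∈ (Sn n s).head?) :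
    b.head? = s.head? := by
  rw [Sn] at hb
  split_ifs at hb
  · simp at hb
  · simp_all
  · simp only [List.head?_cons, Option.mem_def, Option.some.injEq] at hb
    rw [← hb, List.head?_take, if_neg (by omega)]

theorem ne_nil_and_basic_of_mem_Sn (hn : 1 ≤ n) (s : List (A × Fin k)) :
    ∀ l ∈ Sn n s, l ≠ [] ∧ basic n l := by
  induction s using Sn.induct n with
  | case1 s h => simp [List.length_eq_zero_iff.1 h, Sn_nil]
  | case2 s h hb =>
    rw [Sn_of_basic (by simpa using h) hb, List.forall_mem_singleton]
    exact ⟨by simpa using h, hb⟩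
  | case3 s h hb ih =>
    have hlbp := one_le_lbp hn (s := s) (by simpa using h)
    rw [max_eq_right hlbp] at ih
    rw [Sn_of_not_basic hn hb, List.forall_mem_cons]
    refine ⟨⟨?_, basic_take_lbp n s⟩, ih⟩
    rw [← List.length_pos_iff, List.length_take_of_le (lbp_lt_length hb).le]
    exact hlbp

theorem structured_Sn (hn : 1 ≤ n) (s : List (A × Fin k)) : structured n (Sn n s) := by
  induction s using Sn.induct n with
  | case1 s h =>
    rw [List.length_eq_zero_iff.1 h, Sn_nil]
    exact List.IsChain.nil
  | case2 s h hb =>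
    rw [Sn_of_basic (by simpa using h) hb]
    exact List.IsChain.singleton _
  | case3 s h hb ih =>
    rw [max_eq_right (one_le_lbp hn (by simpa using h))] at ih
    show List.IsChain _ _
    rw [Sn_of_not_basic hn hb, List.isChain_cons]
    refine ⟨fun b hb' => ?_, ih⟩
    rw [head?_eq_of_mem_head?_Sn hb']
    exact length_take_lbp_eq_or_head_drop_lbp_mem hb

end Structuring

theorem stmt_2_general {A : Type} {n k : ℕ} (hn : 1 ≤ n)
    (s : List (A × Fin k)) :
    (∀ l ∈ Sn n s, l ≠ [] ∧ basic n l) ∧ structured n (Sn n s) :=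
  ⟨ne_nil_and_basic_of_mem_Sn hn s, structured_Sn hn s⟩

/-- for every `k`-history `s`, `S_n s` is a structured `n,k`-history,
i.e. all its blocks are nonempty basic lists and the structuredness condition holds. -/
theorem stmt_2 {A : Type} {n k : ℕ} (hn : 1 ≤ n) (hnk : n ≤ k)
    (s : List (A × Fin k)) :
    (∀ l ∈ Sn n s, l ≠ [] ∧ basic n l) ∧ structured n (Sn n s) :=
  stmt_2_general hn s
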